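/- arXiv:1804.03010 — 2 statements merged into one kernel-verified Lean document; each statement's English description precedes it below -/
import Mathlib

section
/- Let M and N be monoids. The diagonal (M×N)-act is finitely presented if and only if both the diagonal M-act and the diagonal N-act are finitely presented. -/
/-- The axioms for a right action of a monoid `M` on a set `A`:
`act a 1 = a` and `act a (m * n) = act (act a m) n`. -/
def IsAct {M A : Type*} [Monoid M] (act : A → M → A) : Prop :=
  (∀ a, act a 1 = a) ∧ ∀ a m n, act a (m * n) = act (act a m) n

/-- `U ⊆ A` is a generating set for the act `(A, act)`: every element of `A`
has the form `u m` with `u ∈ U`, `m ∈ M`. -/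
def Generates {M A : Type*} (act : A → M → A) (U : Set A) : Prop :=
  ∀ a : A, ∃ u ∈ U, ∃ m : M, act u m = a

/-- An act is finitely generated if it has a finite generating set. -/
def ActFG {M A : Type*} (act : A → M → A) : Prop :=
  ∃ U : Set A, U.Finite ∧ Generates act U

/-- The free `M`-act on a set `X`: the set `X × M` with action `(x, m) n = (x, m n)`. -/
def FreeAct (M : Type*) [Monoid M] (X : Type*) : X × M → M → X × M :=
  fun p m => (p.1, p.2 * m)

/-- The congruence on the act `(A, act)` generated by a set `R ⊆ A × A`:
the smallest equivalence relation containing `R` that is compatible with the action. -/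
def CongGen {M A : Type*} (act : A → M → A) (R : Set (A × A)) (a b : A) : Prop :=
  ∀ r : A → A → Prop, Equivalence r →
    (∀ x y (m : M), r x y → r (act x m) (act y m)) →
    (∀ p ∈ R, r p.1 p.2) → r a b

/-- An `M`-act `(A, act)` is finitely presented if it is defined by a presentation
`⟨X | R⟩` with `X` and `R` finite, i.e. there is a surjective `M`-equivariant map
`π : F_X → A` whose kernel is the congruence on `F_X` generated by `R`. -/
def ActFP (M : Type*) [Monoid M] {A : Type*} (act : A → M → A) : Prop :=
  ∃ (X : Type) (_ : Finite X) (R : Set ((X × M) × (X × M))), R.Finite ∧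
    ∃ π : X × M → A, Function.Surjective π ∧
      (∀ p m, π (FreeAct M X p m) = act (π p) m) ∧
      ∀ w₁ w₂ : X × M, π w₁ = π w₂ ↔ CongGen (FreeAct M X) R w₁ w₂

/-- The diagonal `M`-act: `M × M` with action `(a, b) c = (a c, b c)`. -/
def DiagAct (M : Type*) [Monoid M] : M × M → M → M × M :=
  fun p c => (p.1 * c, p.2 * c)

section Helpers
open Relation

/-- One elementary rewriting step. -/
def StepRel {M A : Type*} (act : A → M → A) (R : Set (A × A)) (a b : A) : Prop :=
  ∃ p ∈ R, ∃ m : M, act p.1 m = a ∧ act p.2 m = b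

lemma isAct_freeAct (M : Type*) [Monoid M] (X : Type*) : IsAct (FreeAct M X) :=
  ⟨fun a => by simp [FreeAct], fun a m n => by simp [FreeAct, mul_assoc]⟩

lemma congGen_iff_eqvGen {M A : Type*} [Monoid M] {act : A → M → A} (h : IsAct act)
    (R : Set (A × A)) (a b : A) :
    CongGen act R a b ↔ EqvGen (StepRel act R) a b := by
  constructor
  · intro H
    refine H _ (EqvGen.is_equivalence _) ?_ ?_
    · intro x y m hxy
      induction hxy with
      | rel u v huv =>
        obtain ⟨p, hp, k, hk1, hk2⟩ := huv
        exact EqvGen.rel _ _ ⟨p, hp, k * m, by rw [h.2, hk1], by rw [h.2, hk2]⟩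
      | refl u => exact EqvGen.refl _
      | symm u v _ ih => exact EqvGen.symm _ _ ih
      | trans u v w _ _ ih1 ih2 => exact EqvGen.trans _ _ _ ih1 ih2
    · intro p hp
      exact EqvGen.rel _ _ ⟨p, hp, 1, h.1 _, h.1 _⟩
  · intro H
    intro r hr hcomp hR
    induction H with
    | rel u v huv =>
      obtain ⟨p, hp, k, hk1, hk2⟩ := huv
      rw [← hk1, ← hk2]
      exact hcomp _ _ k (hR p hp)
    | refl u => exact hr.refl _
    | symm u v _ ih => exact hr.symm ih
    | trans u v w _ _ ih1 ih2 => exact hr.trans ih1 ih2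

lemma congGen_of_mem {M A : Type*} {act : A → M → A} {R : Set (A × A)} {p : A × A}
    (hp : p ∈ R) : CongGen act R p.1 p.2 :=
  fun _ _ _ hR => hR p hp

lemma congGen_le_ker {M A X : Type*} [Monoid M] (π : X × M → A) (act : A → M → A)
    (hπe : ∀ p m, π (FreeAct M X p m) = act (π p) m)
    (R : Set ((X × M) × (X × M))) (hR : ∀ p ∈ R, π p.1 = π p.2) {w₁ w₂ : X × M}
    (h : CongGen (FreeAct M X) R w₁ w₂) : π w₁ = π w₂ :=
  h (fun a b => π a = π b) ⟨fun _ => rfl, Eq.symm, Eq.trans⟩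
    (fun x y m hxy => by show π _ = π _; rw [hπe, hπe]; exact congrArg (fun z => act z m) hxy) hR

lemma eqvGen_map {A B : Type*} {r : A → A → Prop} {r' : B → B → Prop} (f : A → B)
    (h : ∀ a b, r a b → r' (f a) (f b)) {a b : A} (H : EqvGen r a b) :
    EqvGen r' (f a) (f b) := by
  induction H with
  | rel u v huv => exact EqvGen.rel _ _ (h _ _ huv)
  | refl u => exact EqvGen.refl _
  | symm u v _ ih => exact EqvGen.symm _ _ ih
  | trans u v w _ _ ih1 ih2 => exact EqvGen.trans _ _ _ ih1 ih2

end Helpers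

section Tietze
open Relation Function

lemma tietze {M A X₁ X₂ : Type*} [Monoid M] [Finite X₂]
    (act : A → M → A)
    (π₁ : X₁ × M → A) (π₂ : X₂ × M → A)
    (h₁s : Surjective π₁) (h₂s : Surjective π₂)
    (h₁e : ∀ p m, π₁ (FreeAct M X₁ p m) = act (π₁ p) m)
    (h₂e : ∀ p m, π₂ (FreeAct M X₂ p m) = act (π₂ p) m)
    (R₁ : Set ((X₁ × M) × (X₁ × M))) (hR₁f : R₁.Finite)
    (hk₁ : ∀ w₁ w₂, π₁ w₁ = π₁ w₂ ↔ CongGen (FreeAct M X₁) R₁ w₁ w₂) :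
    ∃ R₂ : Set ((X₂ × M) × (X₂ × M)), R₂.Finite ∧
      ∀ w₁ w₂, π₂ w₁ = π₂ w₂ ↔ CongGen (FreeAct M X₂) R₂ w₁ w₂ := by
  classical
  choose T0 hT0 using fun x : X₂ => h₁s (π₂ (x, 1))
  choose T0' hT0' using fun x : X₁ => h₂s (π₁ (x, 1))
  set T : X₂ × M → X₁ × M := fun w => ((T0 w.1).1, (T0 w.1).2 * w.2) with hTdef
  set T' : X₁ × M → X₂ × M := fun w => ((T0' w.1).1, (T0' w.1).2 * w.2) with hT'def
  have hT : ∀ w, π₁ (T w) = π₂ w := by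
    rintro ⟨x, m⟩
    have h1 : π₁ (T (x, m)) = act (π₁ (T0 x)) m := h₁e (T0 x) m
    have h2 : π₂ (x, m) = act (π₂ (x, 1)) m := by
      have := h₂e (x, 1) m
      simpa [FreeAct] using this
    rw [h1, h2, hT0]
  have hT' : ∀ w, π₂ (T' w) = π₁ w := by
    rintro ⟨x, m⟩
    have h1 : π₂ (T' (x, m)) = act (π₂ (T0' x)) m := h₂e (T0' x) m
    have h2 : π₁ (x, m) = act (π₁ (x, 1)) m := by
      have := h₁e (x, 1) m
      simpa [FreeAct] using this
    rw [h1, h2, hT0']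
  have hT'eq : ∀ (w : X₁ × M) (m : M), T' (FreeAct M X₁ w m) = FreeAct M X₂ (T' w) m := by
    rintro ⟨x, k⟩ m
    show ((T0' x).1, (T0' x).2 * (k * m)) = ((T0' x).1, ((T0' x).2 * k) * m)
    rw [mul_assoc]
  set R₂ : Set ((X₂ × M) × (X₂ × M)) :=
      (fun x : X₂ => (T' (T (x, 1)), ((x, 1) : X₂ × M))) '' Set.univ ∪
      (fun p => (T' p.1, T' p.2)) '' R₁ with hR₂def
  refine ⟨R₂, ⟨?_, ?_⟩⟩
  · exact (Set.finite_univ.image _).union (hR₁f.image _)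
  · intro w₁ w₂
    constructor
    · -- hard direction
      intro hw
      have hTw : π₁ (T w₁) = π₁ (T w₂) := by rw [hT, hT, hw]
      have hc : EqvGen (StepRel (FreeAct M X₁) R₁) (T w₁) (T w₂) :=
        (congGen_iff_eqvGen (isAct_freeAct M X₁) R₁ _ _).mp ((hk₁ _ _).mp hTw)
      rw [congGen_iff_eqvGen (isAct_freeAct M X₂)]
      have hmain : EqvGen (StepRel (FreeAct M X₂) R₂) (T' (T w₁)) (T' (T w₂)) := by
        refine eqvGen_map T' ?_ hc
        rintro a b ⟨p, hp, m, hm1, hm2⟩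
        exact ⟨(T' p.1, T' p.2), Or.inr ⟨p, hp, rfl⟩, m,
          by rw [← hm1, hT'eq], by rw [← hm2, hT'eq]⟩
      have hback : ∀ w : X₂ × M, StepRel (FreeAct M X₂) R₂ (T' (T w)) w := by
        rintro ⟨x, m⟩
        refine ⟨(T' (T (x, 1)), (x, 1)), Or.inl ⟨x, trivial, rfl⟩, m, ?_, ?_⟩
        · show ((T0' (T0 x).1).1, (T0' (T0 x).1).2 * ((T0 x).2 * 1) * m)
            = ((T0' (T0 x).1).1, (T0' (T0 x).1).2 * ((T0 x).2 * m))
          rw [mul_one, mul_assoc]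
        · show ((x : X₂), (1 : M) * m) = (x, m)
          rw [one_mul]
      exact ((EqvGen.rel _ _ (hback w₁)).symm _ _).trans _ _ _
        (hmain.trans _ _ _ (EqvGen.rel _ _ (hback w₂)))
    · -- easy direction
      intro hc
      refine congGen_le_ker π₂ act h₂e _ ?_ hc
      rintro p (⟨x, -, rfl⟩ | ⟨q, hq, rfl⟩)
      · show π₂ (T' (T (x, 1))) = π₂ (x, 1)
        rw [hT', hT]
      · show π₂ (T' q.1) = π₂ (T' q.2)
        rw [hT', hT']
        exact (hk₁ _ _).mpr (congGen_of_mem hq)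

end Tietze

section Main
open Relation Function

theorem dir_left {M N : Type*} [Monoid M] [Monoid N]
    (hM : ActFP M (DiagAct M)) (hN : ActFP N (DiagAct N)) :
    ActFP (M × N) (DiagAct (M × N)) := by
  classical
  obtain ⟨XM, _, RM, hRMf, πM, hMs, hMe, hMk⟩ := hM
  obtain ⟨XN, _, RN, hRNf, πN, hNs, hNe, hNk⟩ := hN
  -- componentwise value lemmas
  have hMe' : ∀ (x : XM) (k m : M), πM (x, k * m) = ((πM (x, k)).1 * m, (πM (x, k)).2 * m) :=
    fun x k m => hMe (x, k) m
  have hNe' : ∀ (y : XN) (l n : N), πN (y, l * n) = ((πN (y, l)).1 * n, (πN (y, l)).2 * n) :=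
    fun y l n => hNe (y, l) n
  refine ⟨XM × XN, inferInstance, ?_⟩
  set π : (XM × XN) × (M × N) → (M × N) × (M × N) := fun w =>
    (((πM (w.1.1, w.2.1)).1, (πN (w.1.2, w.2.2)).1),
     ((πM (w.1.1, w.2.1)).2, (πN (w.1.2, w.2.2)).2)) with hπdef
  set R : Set ((((XM × XN) × (M × N))) × (((XM × XN) × (M × N)))) :=
    ((fun q : ((XM × M) × (XM × M)) × XN =>
        (((q.1.1.1, q.2), ((q.1.1.2, 1) : M × N)), ((q.1.2.1, q.2), ((q.1.2.2, 1) : M × N))))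
      '' (RM ×ˢ Set.univ)) ∪
    ((fun q : ((XN × N) × (XN × N)) × XM =>
        (((q.2, q.1.1.1), ((1, q.1.1.2) : M × N)), ((q.2, q.1.2.1), ((1, q.1.2.2) : M × N))))
      '' (RN ×ˢ Set.univ)) with hRdef
  refine ⟨R, ?_, π, ?_, ?_, ?_⟩
  · exact ((hRMf.prod Set.finite_univ).image _).union ((hRNf.prod Set.finite_univ).image _)
  · rintro ⟨⟨p, q⟩, ⟨r, s⟩⟩
    obtain ⟨⟨x, m⟩, hx⟩ := hMs (p, r)
    obtain ⟨⟨y, n⟩, hy⟩ := hNs (q, s)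
    exact ⟨((x, y), (m, n)), by simp [hπdef, hx, hy]⟩
  · rintro ⟨⟨x, y⟩, ⟨m, n⟩⟩ ⟨k, l⟩
    show (((πM (x, m * k)).1, (πN (y, n * l)).1), ((πM (x, m * k)).2, (πN (y, n * l)).2)) = _
    rw [hMe', hNe']
    rfl
  · intro w₁ w₂
    obtain ⟨⟨x₁, y₁⟩, ⟨m₁, n₁⟩⟩ := w₁
    obtain ⟨⟨x₂, y₂⟩, ⟨m₂, n₂⟩⟩ := w₂
    constructor
    · intro hw
      have hw' : πM (x₁, m₁) = πM (x₂, m₂) ∧ πN (y₁, n₁) = πN (y₂, n₂) := by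
        simp only [hπdef, Prod.ext_iff] at hw
        exact ⟨Prod.ext hw.1.1 hw.2.1, Prod.ext hw.1.2 hw.2.2⟩
      rw [congGen_iff_eqvGen (isAct_freeAct _ _)]
      have hMchain := (congGen_iff_eqvGen (isAct_freeAct M XM) RM _ _).mp ((hMk _ _).mp hw'.1)
      have hNchain := (congGen_iff_eqvGen (isAct_freeAct N XN) RN _ _).mp ((hNk _ _).mp hw'.2)
      have hlift1 : EqvGen (StepRel (FreeAct (M × N) (XM × XN)) R)
          ((x₁, y₁), (m₁, n₁)) ((x₂, y₁), (m₂, n₁)) := by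
        refine eqvGen_map (fun z : XM × M => (((z.1, y₁), ((z.2, n₁) : M × N)))) ?_ hMchain
        rintro a b ⟨p, hp, k, hk1, hk2⟩
        refine ⟨(((p.1.1, y₁), (p.1.2, 1)), ((p.2.1, y₁), (p.2.2, 1))),
          Or.inl ⟨(p, y₁), ⟨hp, trivial⟩, by simp⟩, (k, n₁), ?_, ?_⟩
        · show ((p.1.1, y₁), (p.1.2 * k, 1 * n₁)) = ((a.1, y₁), (a.2, n₁))
          rw [one_mul]
          rw [← hk1]
          rfl
        · show ((p.2.1, y₁), (p.2.2 * k, 1 * n₁)) = ((b.1, y₁), (b.2, n₁))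
          rw [one_mul, ← hk2]
          rfl
      have hlift2 : EqvGen (StepRel (FreeAct (M × N) (XM × XN)) R)
          ((x₂, y₁), (m₂, n₁)) ((x₂, y₂), (m₂, n₂)) := by
        refine eqvGen_map (fun z : XN × N => (((x₂, z.1), ((m₂, z.2) : M × N)))) ?_ hNchain
        rintro a b ⟨p, hp, k, hk1, hk2⟩
        refine ⟨(((x₂, p.1.1), (1, p.1.2)), ((x₂, p.2.1), (1, p.2.2))),
          Or.inr ⟨(p, x₂), ⟨hp, trivial⟩, by simp⟩, (m₂, k), ?_, ?_⟩
        · show ((x₂, p.1.1), (1 * m₂, p.1.2 * k)) = ((x₂, a.1), (m₂, a.2))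
          rw [one_mul, ← hk1]
          rfl
        · show ((x₂, p.2.1), (1 * m₂, p.2.2 * k)) = ((x₂, b.1), (m₂, b.2))
          rw [one_mul, ← hk2]
          rfl
      exact hlift1.trans _ _ _ hlift2
    · intro hc
      refine congGen_le_ker π (DiagAct (M × N)) ?_ R ?_ hc
      · rintro ⟨⟨x, y⟩, ⟨m, n⟩⟩ ⟨k, l⟩
        show (((πM (x, m * k)).1, (πN (y, n * l)).1), ((πM (x, m * k)).2, (πN (y, n * l)).2)) = _
        rw [hMe', hNe']
        rfl
      · rintro p (⟨q, ⟨hq, -⟩, rfl⟩ | ⟨q, ⟨hq, -⟩, rfl⟩)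
        · have : πM q.1.1 = πM q.1.2 := (hMk _ _).mpr (congGen_of_mem hq)
          simp [hπdef, this]
        · have : πN q.1.1 = πN q.1.2 := (hNk _ _).mpr (congGen_of_mem hq)
          simp [hπdef, this]

end Main

section Half
open Relation Function

theorem half {M N : Type*} [Monoid M] [Monoid N]
    (h : ActFP (M × N) (DiagAct (M × N))) : ActFP M (DiagAct M) := by
  classical
  obtain ⟨X, _, R, hRf, π, hs, he, hk⟩ := h
  -- values of generators
  have hval : ∀ (x : X) (s : M × N), π (x, s) = DiagAct (M × N) (π (x, 1)) s := by
    intro x s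
    have := he (x, 1) s
    simpa [FreeAct] using this
  set a : X → M := fun x => (π (x, 1)).1.1 with hadef
  set b : X → N := fun x => (π (x, 1)).1.2 with hbdef
  set c : X → M := fun x => (π (x, 1)).2.1 with hcdef
  set d : X → N := fun x => (π (x, 1)).2.2 with hddef
  have hval' : ∀ (x : X) (m : M) (n : N),
      π (x, (m, n)) = ((a x * m, b x * n), (c x * m, d x * n)) := by
    intro x m n
    rw [hval]
    rfl
  -- the new presentation map for the (M×N)-act, with doubled index set
  set π₂ : (X × X) × (M × N) → (M × N) × (M × N) := fun w =>
    ((a w.1.1 * w.2.1, b w.1.2 * w.2.2), (c w.1.1 * w.2.1, d w.1.2 * w.2.2)) with hπ₂def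
  have hπ₂diag : ∀ (x : X) (s : M × N), π₂ ((x, x), s) = π (x, s) := by
    rintro x ⟨m, n⟩
    rw [hval']
  have h₂s : Surjective π₂ := by
    intro v
    obtain ⟨⟨x, s⟩, hw⟩ := hs v
    exact ⟨((x, x), s), by rw [hπ₂diag, hw]⟩
  have h₂e : ∀ (p : (X × X) × (M × N)) (k : M × N),
      π₂ (FreeAct (M × N) (X × X) p k) = DiagAct (M × N) (π₂ p) k := by
    rintro ⟨⟨x, y⟩, ⟨m, n⟩⟩ ⟨k, l⟩
    show ((a x * (m * k), b y * (n * l)), (c x * (m * k), d y * (n * l))) = _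
    simp [DiagAct, hπ₂def, mul_assoc]
  obtain ⟨R₂, hR₂f, hk₂⟩ := tietze (DiagAct (M × N)) π π₂ hs h₂s he h₂e R hRf hk
  -- now project to M
  refine ⟨X × X, inferInstance, ?_⟩
  set πM : (X × X) × M → M × M := fun z => (a z.1.1 * z.2, c z.1.1 * z.2) with hπMdef
  set RM : Set (((X × X) × M) × ((X × X) × M)) :=
    ((fun p : ((X × X) × (M × N)) × ((X × X) × (M × N)) =>
        (((p.1.1, p.1.2.1) : (X × X) × M), ((p.2.1, p.2.2.1) : (X × X) × M))) '' R₂) ∪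
    ((fun t : (X × X) × X =>
        ((((t.1, (1 : M)) : (X × X) × M)), ((((t.1.1, t.2), (1 : M)) : (X × X) × M)))) ''
      Set.univ) with hRMdef
  refine ⟨RM, ?_, πM, ?_, ?_, ?_⟩
  · exact (hR₂f.image _).union (Set.finite_univ.image _)
  · rintro ⟨p, r⟩
    obtain ⟨⟨x, s⟩, hw⟩ := hs ((p, 1), (r, 1))
    rw [hval'] at hw
    refine ⟨((x, x), s.1), ?_⟩
    show (a x * s.1, c x * s.1) = (p, r)
    obtain ⟨⟨h1, -⟩, ⟨h2, -⟩⟩ : (a x * s.1 = p ∧ b x * s.2 = 1) ∧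
        (c x * s.1 = r ∧ d x * s.2 = 1) := by
      simpa [Prod.ext_iff] using hw
    rw [h1, h2]
  · rintro ⟨⟨x, y⟩, m⟩ k
    show (a x * (m * k), c x * (m * k)) = _
    simp [DiagAct, hπMdef, mul_assoc]
  · rintro ⟨⟨x₁, y₁⟩, m₁⟩ ⟨⟨x₂, y₂⟩, m₂⟩
    constructor
    · intro hw
      obtain ⟨h1, h2⟩ : a x₁ * m₁ = a x₂ * m₂ ∧ c x₁ * m₁ = c x₂ * m₂ := by
        simpa [hπMdef, Prod.ext_iff] using hw
      have hw₂ : π₂ ((x₁, y₁), (m₁, 1)) = π₂ ((x₂, y₁), (m₂, 1)) := by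
        simp [hπ₂def, h1, h2]
      have hc := (congGen_iff_eqvGen (isAct_freeAct _ _) R₂ _ _).mp ((hk₂ _ _).mp hw₂)
      rw [congGen_iff_eqvGen (isAct_freeAct _ _)]
      have hproj : EqvGen (StepRel (FreeAct M (X × X)) RM)
          ((x₁, y₁), m₁) ((x₂, y₁), m₂) := by
        refine eqvGen_map (fun w : (X × X) × (M × N) => ((w.1, w.2.1) : (X × X) × M)) ?_ hc
        rintro u v ⟨p, hp, k, hk1, hk2⟩
        refine ⟨((p.1.1, p.1.2.1), (p.2.1, p.2.2.1)), Or.inl ⟨p, hp, rfl⟩, k.1, ?_, ?_⟩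
        · show (p.1.1, p.1.2.1 * k.1) = (u.1, u.2.1)
          rw [← hk1]
          rfl
        · show (p.2.1, p.2.2.1 * k.1) = (v.1, v.2.1)
          rw [← hk2]
          rfl
      have hlast : StepRel (FreeAct M (X × X)) RM ((x₂, y₁), m₂) ((x₂, y₂), m₂) :=
        ⟨(((x₂, y₁), 1), ((x₂, y₂), 1)), Or.inr ⟨((x₂, y₁), y₂), trivial, rfl⟩, m₂,
          by show ((x₂, y₁), 1 * m₂) = ((x₂, y₁), m₂); rw [one_mul],
          by show ((x₂, y₂), 1 * m₂) = ((x₂, y₂), m₂); rw [one_mul]⟩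
      exact hproj.trans _ _ _ (EqvGen.rel _ _ hlast)
    · intro hc
      refine congGen_le_ker πM (DiagAct M) ?_ RM ?_ hc
      · rintro ⟨⟨x, y⟩, m⟩ k
        show (a x * (m * k), c x * (m * k)) = _
        simp [DiagAct, hπMdef, mul_assoc]
      · rintro p (⟨q, hq, rfl⟩ | ⟨t, -, rfl⟩)
        · have : π₂ q.1 = π₂ q.2 := (hk₂ _ _).mpr (congGen_of_mem hq)
          obtain ⟨h1, h2⟩ : a q.1.1.1 * q.1.2.1 = a q.2.1.1 * q.2.2.1 ∧
              c q.1.1.1 * q.1.2.1 = c q.2.1.1 * q.2.2.1 := by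
            simp only [hπ₂def, Prod.ext_iff] at this
            exact ⟨this.1.1, this.2.1⟩
          show (a q.1.1.1 * q.1.2.1, c q.1.1.1 * q.1.2.1) = _
          rw [h1, h2]
        · show (a t.1.1 * 1, c t.1.1 * 1) = (a t.1.1 * 1, c t.1.1 * 1)
          rfl

end Half

section HalfN
open Relation Function

theorem halfN {M N : Type*} [Monoid M] [Monoid N]
    (h : ActFP (M × N) (DiagAct (M × N))) : ActFP N (DiagAct N) := by
  classical
  obtain ⟨X, _, R, hRf, π, hs, he, hk⟩ := h
  have hval : ∀ (x : X) (s : M × N), π (x, s) = DiagAct (M × N) (π (x, 1)) s := by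
    intro x s
    have := he (x, 1) s
    simpa [FreeAct] using this
  set a : X → M := fun x => (π (x, 1)).1.1 with hadef
  set b : X → N := fun x => (π (x, 1)).1.2 with hbdef
  set c : X → M := fun x => (π (x, 1)).2.1 with hcdef
  set d : X → N := fun x => (π (x, 1)).2.2 with hddef
  have hval' : ∀ (x : X) (m : M) (n : N),
      π (x, (m, n)) = ((a x * m, b x * n), (c x * m, d x * n)) := by
    intro x m n
    rw [hval]
    rfl
  set π₂ : (X × X) × (M × N) → (M × N) × (M × N) := fun w =>
    ((a w.1.1 * w.2.1, b w.1.2 * w.2.2), (c w.1.1 * w.2.1, d w.1.2 * w.2.2)) with hπ₂def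
  have hπ₂diag : ∀ (x : X) (s : M × N), π₂ ((x, x), s) = π (x, s) := by
    rintro x ⟨m, n⟩
    rw [hval']
  have h₂s : Surjective π₂ := by
    intro v
    obtain ⟨⟨x, s⟩, hw⟩ := hs v
    exact ⟨((x, x), s), by rw [hπ₂diag, hw]⟩
  have h₂e : ∀ (p : (X × X) × (M × N)) (k : M × N),
      π₂ (FreeAct (M × N) (X × X) p k) = DiagAct (M × N) (π₂ p) k := by
    rintro ⟨⟨x, y⟩, ⟨m, n⟩⟩ ⟨k, l⟩
    show ((a x * (m * k), b y * (n * l)), (c x * (m * k), d y * (n * l))) = _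
    simp [DiagAct, hπ₂def, mul_assoc]
  obtain ⟨R₂, hR₂f, hk₂⟩ := tietze (DiagAct (M × N)) π π₂ hs h₂s he h₂e R hRf hk
  -- now project to N
  refine ⟨X × X, inferInstance, ?_⟩
  set πN : (X × X) × N → N × N := fun z => (b z.1.2 * z.2, d z.1.2 * z.2) with hπNdef
  set RN : Set (((X × X) × N) × ((X × X) × N)) :=
    ((fun p : ((X × X) × (M × N)) × ((X × X) × (M × N)) =>
        (((p.1.1, p.1.2.2) : (X × X) × N), ((p.2.1, p.2.2.2) : (X × X) × N))) '' R₂) ∪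
    ((fun t : (X × X) × X =>
        ((((t.1, (1 : N)) : (X × X) × N)), ((((t.2, t.1.2), (1 : N)) : (X × X) × N)))) ''
      Set.univ) with hRNdef
  refine ⟨RN, ?_, πN, ?_, ?_, ?_⟩
  · exact (hR₂f.image _).union (Set.finite_univ.image _)
  · rintro ⟨q, s⟩
    obtain ⟨⟨x, t⟩, hw⟩ := hs ((1, q), (1, s))
    rw [hval'] at hw
    refine ⟨((x, x), t.2), ?_⟩
    show (b x * t.2, d x * t.2) = (q, s)
    obtain ⟨⟨-, h1⟩, ⟨-, h2⟩⟩ : (a x * t.1 = 1 ∧ b x * t.2 = q) ∧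
        (c x * t.1 = 1 ∧ d x * t.2 = s) := by
      simpa [Prod.ext_iff] using hw
    rw [h1, h2]
  · rintro ⟨⟨x, y⟩, n⟩ k
    show (b y * (n * k), d y * (n * k)) = _
    simp [DiagAct, hπNdef, mul_assoc]
  · rintro ⟨⟨x₁, y₁⟩, n₁⟩ ⟨⟨x₂, y₂⟩, n₂⟩
    constructor
    · intro hw
      obtain ⟨h1, h2⟩ : b y₁ * n₁ = b y₂ * n₂ ∧ d y₁ * n₁ = d y₂ * n₂ := by
        simpa [hπNdef, Prod.ext_iff] using hw
      have hw₂ : π₂ ((x₁, y₁), (1, n₁)) = π₂ ((x₁, y₂), (1, n₂)) := by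
        simp [hπ₂def, h1, h2]
      have hc := (congGen_iff_eqvGen (isAct_freeAct _ _) R₂ _ _).mp ((hk₂ _ _).mp hw₂)
      rw [congGen_iff_eqvGen (isAct_freeAct _ _)]
      have hproj : EqvGen (StepRel (FreeAct N (X × X)) RN)
          ((x₁, y₁), n₁) ((x₁, y₂), n₂) := by
        refine eqvGen_map (fun w : (X × X) × (M × N) => ((w.1, w.2.2) : (X × X) × N)) ?_ hc
        rintro u v ⟨p, hp, k, hk1, hk2⟩
        refine ⟨((p.1.1, p.1.2.2), (p.2.1, p.2.2.2)), Or.inl ⟨p, hp, rfl⟩, k.2, ?_, ?_⟩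
        · show (p.1.1, p.1.2.2 * k.2) = (u.1, u.2.2)
          rw [← hk1]
          rfl
        · show (p.2.1, p.2.2.2 * k.2) = (v.1, v.2.2)
          rw [← hk2]
          rfl
      have hlast : StepRel (FreeAct N (X × X)) RN ((x₁, y₂), n₂) ((x₂, y₂), n₂) :=
        ⟨(((x₁, y₂), 1), ((x₂, y₂), 1)), Or.inr ⟨((x₁, y₂), x₂), trivial, rfl⟩, n₂,
          by show ((x₁, y₂), 1 * n₂) = ((x₁, y₂), n₂); rw [one_mul],
          by show ((x₂, y₂), 1 * n₂) = ((x₂, y₂), n₂); rw [one_mul]⟩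
      exact hproj.trans _ _ _ (EqvGen.rel _ _ hlast)
    · intro hc
      refine congGen_le_ker πN (DiagAct N) ?_ RN ?_ hc
      · rintro ⟨⟨x, y⟩, n⟩ k
        show (b y * (n * k), d y * (n * k)) = _
        simp [DiagAct, hπNdef, mul_assoc]
      · rintro p (⟨q, hq, rfl⟩ | ⟨t, -, rfl⟩)
        · have : π₂ q.1 = π₂ q.2 := (hk₂ _ _).mpr (congGen_of_mem hq)
          obtain ⟨h1, h2⟩ : b q.1.1.2 * q.1.2.2 = b q.2.1.2 * q.2.2.2 ∧
              d q.1.1.2 * q.1.2.2 = d q.2.1.2 * q.2.2.2 := by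
            simp only [hπ₂def, Prod.ext_iff] at this
            exact ⟨this.1.2, this.2.2⟩
          show (b q.1.1.2 * q.1.2.2, d q.1.1.2 * q.1.2.2) = _
          rw [h1, h2]
        · show (b t.1.2 * 1, d t.1.2 * 1) = (b t.1.2 * 1, d t.1.2 * 1)
          rfl

end HalfN


/-- The diagonal `(M × N)`-act is finitely presented if and only if both the diagonal
`M`-act and the diagonal `N`-act are finitely presented. -/
theorem stmt6 {M N : Type*} [Monoid M] [Monoid N] :
    ActFP (M × N) (DiagAct (M × N)) ↔ ActFP M (DiagAct M) ∧ ActFP N (DiagAct N) := by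
  exact ⟨fun h => ⟨half h, halfN h⟩, fun h => dir_left h.1 h.2⟩
end

section
/- Let M be a monoid, let A be a right M-act disjoint from M, and let N = 𝒰(M,A). If the diagonal N-act is finitely presented, then both the diagonal M-act and the M-act A are finitely presented. -/
/-- The multiplication of the monoid `𝒰(M, A)` on `M ⊕ A` (the disjoint union of `M`
and `A`): `x ∘ y = x y` for `x, y ∈ M`; `x ∘ y = x · y` for `x ∈ A`, `y ∈ M`;
`x ∘ y = y` for `y ∈ A`. -/
def umul {M A : Type*} [Monoid M] (act : A → M → A) : M ⊕ A → M ⊕ A → M ⊕ A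
  | Sum.inl x, Sum.inl y => Sum.inl (x * y)
  | Sum.inr a, Sum.inl y => Sum.inr (act a y)
  | Sum.inl _, Sum.inr b => Sum.inr b
  | Sum.inr _, Sum.inr b => Sum.inr b

/-- Associativity of `umul`. -/
theorem umul_assoc {M A : Type*} [Monoid M] (act : A → M → A) (hact : IsAct act) :
    ∀ x y z : M ⊕ A, umul act (umul act x y) z = umul act x (umul act y z) := by
  rintro (x | a) (y | b) (z | c) <;> simp [umul, mul_assoc, hact.2]

/-- The monoid `𝒰(M, A)` on the disjoint union `M ⊕ A`, with identity `1_M`;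
`M` is a submonoid and `A` is an ideal of it. -/
def UMonoid {M A : Type*} [Monoid M] (act : A → M → A) (hact : IsAct act) :
    Monoid (M ⊕ A) where
  mul := umul act
  one := Sum.inl 1
  mul_assoc := umul_assoc act hact
  one_mul := by
    rintro (x | a) <;> (show umul act (Sum.inl 1) _ = _) <;> simp [umul]
  mul_one := by
    rintro (x | a) <;> (show umul act _ (Sum.inl 1) = _) <;> simp [umul, hact.1]

/-! In `N = 𝒰(M, A)` the complement `A` of `M` is an ideal, so in the diagonal `N`-act the
subsets `M × M` and `A × M` are closed under `M`, and `(p, q) n` lies in one of them only if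
`(p, q)` does and `n ∈ M`. For such a subset a chain of defining relations of the free `N`-act
that starts inside it never leaves it, so the generators landing in it and the relations among
them present it as an `M`-act. Hence `M × M` and `A × M` are finitely presented.

The act `A` is the quotient of `A × M` by equality of first coordinates. That congruence is
generated by finitely many pairs `((a, m), (a, 1))`: generators of `A × M` bring any `(a, m)` to
some `(δ, 1) v` with `δ` from a finite set, and generators of the diagonal act then give a common
second coordinate to two such elements with the same first coordinate. -/

open Function

namespace CongGen

variable {M A : Type*} {act : A → M → A} {R : Set (A × A)} {a b c : A}

theorem refl (a : A) : CongGen act R a a := fun _ hr _ _ => hr.refl a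

theorem symm (h : CongGen act R a b) : CongGen act R b a :=
  fun r hr hc hR => hr.symm (h r hr hc hR)

theorem trans (h₁ : CongGen act R a b) (h₂ : CongGen act R b c) : CongGen act R a c :=
  fun r hr hc hR => hr.trans (h₁ r hr hc hR) (h₂ r hr hc hR)

theorem compat (m : M) (h : CongGen act R a b) : CongGen act R (act a m) (act b m) :=
  fun r hr hc hR => hc _ _ m (h r hr hc hR)

theorem of_mem {p : A × A} (hp : p ∈ R) : CongGen act R p.1 p.2 :=
  fun _ _ _ hR => hR p hp

theorem mono {S : Set (A × A)} (hRS : R ⊆ S) (h : CongGen act R a b) : CongGen act S a b :=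
  fun r hr hc hS => h r hr hc fun p hp => hS p (hRS hp)

theorem map {N B : Type*} {actB : B → N → B} {S : Set (B × B)} (f : A → B) (φ : M → N)
    (hf : ∀ a m, CongGen actB S (f (act a m)) (actB (f a) (φ m)))
    (hR : ∀ p ∈ R, CongGen actB S (f p.1) (f p.2)) (h : CongGen act R a b) :
    CongGen actB S (f a) (f b) :=
  h (fun a b => CongGen actB S (f a) (f b)) ⟨fun _ => refl _, symm, trans⟩
    (fun x y m hxy => (hf x m).trans ((hxy.compat (φ m)).trans (hf y m).symm)) hR

theorem apply_eq {B : Type*} {actB : B → M → B} (f : A → B)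
    (hf : ∀ a m, f (act a m) = actB (f a) m) (hR : ∀ p ∈ R, f p.1 = f p.2)
    (h : CongGen act R a b) : f a = f b :=
  h (fun a b => f a = f b) ⟨fun _ => rfl, Eq.symm, Eq.trans⟩
    (fun x y m hxy => by rw [hf, hf, hxy]) hR

theorem comap_iff {N P Q : Type*} {actP : P → N → P} {actQ : Q → M → Q} {R : Set (P × P)}
    {e : Q → P} {ι : M → N} (he : Injective e)
    (hact : ∀ q m, e (actQ q m) = actP (e q) (ι m))
    (hdiv : ∀ p n, actP p n ∈ Set.range e → p ∈ Set.range e ∧ n ∈ Set.range ι)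
    (hsat : ∀ p p', CongGen actP R p p' → p ∈ Set.range e → p' ∈ Set.range e) {q q' : Q} :
    CongGen actQ (Prod.map e e ⁻¹' R) q q' ↔ CongGen actP R (e q) (e q') := by
  refine ⟨map e ι (fun q m => hact q m ▸ refl _) (fun p hp => of_mem (p := Prod.map e e p) hp),
    fun h => ?_⟩
  -- a chain starting in `range e` stays there by `hsat`, and by `hdiv` each link pulls back
  let r : P → P → Prop := fun p p' =>
    CongGen actP R p p' ∧
      ∀ q q', e q = p → e q' = p' → CongGen actQ (Prod.map e e ⁻¹' R) q q'
  have hr : Equivalence r := by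
    refine ⟨fun p => ⟨refl p, fun q q' hq hq' => he (hq.trans hq'.symm) ▸ refl q⟩, ?_, ?_⟩
    · rintro p p' ⟨hpp', H⟩
      exact ⟨hpp'.symm, fun q q' hq hq' => (H q' q hq' hq).symm⟩
    · rintro p₁ p₂ p₃ ⟨h₁₂, H₁₂⟩ ⟨h₂₃, H₂₃⟩
      refine ⟨h₁₂.trans h₂₃, fun q₁ q₃ hq₁ hq₃ => ?_⟩
      obtain ⟨q₂, hq₂⟩ := hsat _ _ h₁₂ ⟨q₁, hq₁⟩
      exact (H₁₂ q₁ q₂ hq₁ hq₂).trans (H₂₃ q₂ q₃ hq₂ hq₃)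
  have hr_compat : ∀ p p' n, r p p' → r (actP p n) (actP p' n) := by
    rintro p p' n ⟨hpp', H⟩
    refine ⟨hpp'.compat n, fun q q' hq hq' => ?_⟩
    obtain ⟨⟨u, rfl⟩, t, rfl⟩ := hdiv p n ⟨q, hq⟩
    obtain ⟨u', rfl⟩ := hsat _ _ hpp' ⟨u, rfl⟩
    rw [← hact] at hq hq'
    rw [he hq, he hq']
    exact (H u u' rfl rfl).compat t
  refine (h r hr hr_compat (fun p hp => ⟨of_mem hp, fun q q' hq hq' => ?_⟩)).2 q q' rfl rfl
  refine of_mem (p := (q, q')) ?_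
  rwa [Set.mem_preimage, Prod.map_apply, hq, hq']

end CongGen

theorem ActFP.actFG {M A : Type*} [Monoid M] {act : A → M → A} (h : ActFP M act) :
    ActFG act := by
  obtain ⟨X, _, R, -, π, hπ, hπact, -⟩ := h
  refine ⟨Set.range fun x => π (x, 1), Set.finite_range _, fun a => ?_⟩
  obtain ⟨⟨x, m⟩, rfl⟩ := hπ a
  exact ⟨_, ⟨x, rfl⟩, m, by rw [← hπact]; simp [FreeAct]⟩

theorem ActFP.restrict {M N B C : Type*} [Monoid M] [Monoid N] {actB : B → N → B}
    {actC : C → M → C} (ι : M →ₙ* N) (hι : Injective ι) {j : C → B} (hj : Injective j)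
    (hjact : ∀ c m, j (actC c m) = actB (j c) (ι m))
    (hdiv : ∀ b n, actB b n ∈ Set.range j → b ∈ Set.range j ∧ n ∈ Set.range ι)
    (h : ActFP N actB) : ActFP M actC := by
  obtain ⟨X, _, R, hR, π, hπ, hπact, hker⟩ := h
  have hπ_one : ∀ x ν, π (x, ν) = actB (π (x, 1)) ν := fun x ν => by
    rw [← hπact]; simp [FreeAct]
  let Y := {x : X // π (x, 1) ∈ Set.range j}
  let e : Y × M → X × N := fun w => (w.1.1, ι w.2)
  have he : Injective e := fun w w' h => by
    simp only [e, Prod.mk.injEq] at h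
    exact Prod.ext (Subtype.ext h.1) (hι h.2)
  have he_act : ∀ w m, e (FreeAct M Y w m) = FreeAct N X (e w) (ι m) := fun w m => by
    simp [e, FreeAct, map_mul]
  have hmem : ∀ w, π w ∈ Set.range j → w ∈ Set.range e := by
    rintro ⟨x, ν⟩ hw
    rw [hπ_one] at hw
    obtain ⟨hx, m, rfl⟩ := hdiv _ _ hw
    exact ⟨(⟨x, hx⟩, m), rfl⟩
  have hπe : ∀ w, ∃ c, j c = π (e w) := by
    rintro ⟨⟨x, c, hc⟩, m⟩
    exact ⟨actC c m, by show _ = π (x, ι m); rw [hjact, hc, ← hπ_one]⟩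
  choose πC hπC using hπe
  refine ⟨Y, inferInstance, Prod.map e e ⁻¹' R,
    hR.preimage (he.prodMap he).injOn, πC, fun c => ?_, fun w m => ?_,
    fun w w' => ?_⟩
  · obtain ⟨w, hw⟩ := hπ (j c)
    obtain ⟨v, rfl⟩ := hmem w ⟨c, hw.symm⟩
    exact ⟨v, hj ((hπC v).trans hw)⟩
  · apply hj
    rw [hπC, hjact, he_act, hπact, hπC]
  · rw [← hj.eq_iff, hπC, hπC, hker, CongGen.comap_iff he he_act]
    · rintro p n ⟨v, hv⟩
      have hpn : actB (π p) n ∈ Set.range j := by rw [← hπact, ← hv]; exact ⟨_, hπC v⟩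
      obtain ⟨hp, hn⟩ := hdiv _ _ hpn
      exact ⟨hmem p hp, hn⟩
    · rintro p p' hpp' ⟨v, rfl⟩
      apply hmem
      rw [← (hker _ _).2 hpp']
      exact ⟨_, hπC v⟩

theorem ActFP.of_surjective_of_finite_congGen {M P Q : Type*} [Monoid M] {actP : P → M → P}
    {actQ : Q → M → Q} (h : ActFP M actP) {f : P → Q} (hf : Surjective f)
    (hf_act : ∀ p m, f (actP p m) = actQ (f p) m) {K : Set (P × P)} (hK : K.Finite)
    (hker : ∀ p p', f p = f p' ↔ CongGen actP K p p') : ActFP M actQ := by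
  obtain ⟨X, _, R, hR, π, hπ, hπact, hkerπ⟩ := h
  let s := surjInv hπ
  have hs : ∀ p, π (s p) = p := rightInverse_surjInv hπ
  have hsub : R ⊆ R ∪ Prod.map s s '' K := Set.subset_union_left
  have hfπ : ∀ w m, (f ∘ π) (FreeAct M X w m) = actQ ((f ∘ π) w) m := fun w m => by
    simp [hπact, hf_act]
  refine ⟨X, inferInstance, R ∪ Prod.map s s '' K, hR.union (hK.image _), f ∘ π, hf.comp hπ,
    hfπ, fun w w' => ⟨fun hw => ?_, fun hw => hw.apply_eq (f ∘ π) hfπ ?_⟩⟩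
  · have hs_π : ∀ w, CongGen (FreeAct M X) R (s (π w)) w := fun w => (hkerπ _ _).1 (hs _)
    have hlift := ((hker _ _).1 hw).map s id
      (fun p m => ((hkerπ _ _).1 (by rw [hs, hπact, hs]; rfl)).mono hsub)
      (fun p hp => .of_mem (p := Prod.map s s p) (Or.inr ⟨p, hp, rfl⟩))
    exact ((hs_π w).symm.mono hsub).trans (hlift.trans ((hs_π w').mono hsub))
  · rintro p (hp | ⟨q, hq, rfl⟩)
    · exact congrArg f ((hkerπ _ _).2 (.of_mem hp))
    · simpa [hs] using (hker _ _).2 (.of_mem hq)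

def ProdAct {M A : Type*} [Monoid M] (act : A → M → A) : A × M → M → A × M :=
  fun p c => (act p.1 c, p.2 * c)

theorem exists_finite_congGen_fst_eq {M A : Type*} [Monoid M] {act : A → M → A}
    (hact : IsAct act) (hA : ActFG (ProdAct act)) (hM : ActFG (DiagAct M)) :
    ∃ K : Set ((A × M) × (A × M)), K.Finite ∧
      ∀ p p', p.1 = p'.1 ↔ CongGen (ProdAct act) K p p' := by
  obtain ⟨G, hGfin, hG⟩ := hA
  obtain ⟨U, hUfin, hU⟩ := hM
  set D := Set.image2 (fun g q : A × M => act g.1 q.2) G G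
  set F := Set.image2 (fun g q : A × M => ProdAct act g q.2) G G ∪
    Set.image2 (fun δ u => (act δ u, u)) D (Prod.fst '' U ∪ Prod.snd '' U)
  set K := (fun p : A × M => (p, (p.1, (1 : M)))) '' F
  refine ⟨K, ((hGfin.image2 _ hGfin).union
    ((hGfin.image2 _ hGfin).image2 _ ((hUfin.image _).union (hUfin.image _)))).image _,
    fun p p' => ⟨fun h => ?_, fun h => h.apply_eq Prod.fst (fun _ _ => rfl) ?_⟩⟩
  · have hK : ∀ p ∈ F, CongGen (ProdAct act) K p (p.1, 1) :=
      fun p hp => CongGen.of_mem (p := (p, (p.1, 1))) (Set.mem_image_of_mem _ hp)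
    have hnorm : ∀ p ∈ F, ∀ d, CongGen (ProdAct act) K (ProdAct act p d) (act p.1 d, d) :=
      fun p hp d => by simpa only [ProdAct, one_mul] using (hK p hp).compat d
    -- `(a, m) = g c` and `(a, c) = q v` with `g, q ∈ G`, so `(a, m) = (g q.2) v ~ (a, v)`
    have hD : ∀ a m, ∃ δ ∈ D, ∃ v, act δ v = a ∧
        CongGen (ProdAct act) K (a, m) (a, v) := by
      intro a m
      obtain ⟨g, hg, c, hgc⟩ := hG (a, m)
      obtain ⟨q, hq, v, hqv⟩ := hG (a, c)
      simp only [ProdAct, Prod.mk.injEq] at hgc hqv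
      have hδ : act (ProdAct act g q.2).1 v = a := by
        rw [ProdAct, ← hact.2, hqv.2, hgc.1]
      refine ⟨_, Set.mem_image2_of_mem hg hq, v, hδ, ?_⟩
      have hgqv : ProdAct act (ProdAct act g q.2) v = (a, m) := by
        show (act (ProdAct act g q.2).1 v, g.2 * q.2 * v) = (a, m)
        rw [hδ, mul_assoc, hqv.2, hgc.2]
      have h := hnorm _ (Or.inl (Set.mem_image2_of_mem hg hq)) v
      rwa [hgqv, hδ] at h
    have hU_norm : ∀ δ ∈ D, ∀ u ∈ Prod.fst '' U ∪ Prod.snd '' U, ∀ d,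
        CongGen (ProdAct act) K (act δ (u * d), u * d) (act δ (u * d), d) :=
      fun δ hδ u hu d => by
        simpa only [ProdAct, ← hact.2] using hnorm _ (Or.inr (Set.mem_image2_of_mem hδ hu)) d
    obtain ⟨a, m⟩ := p
    obtain ⟨a', m'⟩ := p'
    obtain rfl : a = a' := h
    obtain ⟨δ, hδ, v, rfl, hv⟩ := hD a m
    obtain ⟨δ', hδ', w, hδ'w, hw⟩ := hD (act δ v) m'
    obtain ⟨l, hl, d, hld⟩ := hU (v, w)
    simp only [DiagAct, Prod.mk.injEq] at hld
    have h₁ := hU_norm δ hδ l.1 (Or.inl ⟨l, hl, rfl⟩) d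
    have h₂ := hU_norm δ' hδ' l.2 (Or.inr ⟨l, hl, rfl⟩) d
    rw [hld.1] at h₁
    rw [hld.2, hδ'w] at h₂
    exact hv.trans (h₁.trans (h₂.symm.trans hw.symm))
  · rintro _ ⟨p, -, rfl⟩
    rfl

theorem ActFP.of_prodAct {M A : Type*} [Monoid M] {act : A → M → A} (hact : IsAct act)
    (h : ActFP M (ProdAct act)) (hM : ActFG (DiagAct M)) : ActFP M act := by
  obtain ⟨K, hK, hker⟩ := exists_finite_congGen_fst_eq hact h.actFG hM
  exact h.of_surjective_of_finite_congGen (f := Prod.fst) (fun a => ⟨(a, 1), rfl⟩)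
    (fun _ _ => rfl) hK hker

theorem stmt8_general {M A : Type*} [Monoid M] (act : A → M → A)
    (hact : IsAct act) :
    @ActFP (M ⊕ A) (UMonoid act hact) ((M ⊕ A) × (M ⊕ A))
        (fun p c => (umul act p.1 c, umul act p.2 c)) →
      ActFP M (DiagAct M) ∧ ActFP M act := by
  intro h
  let _ : Monoid (M ⊕ A) := UMonoid act hact
  let ι : M →ₙ* M ⊕ A := ⟨Sum.inl, fun _ _ => rfl⟩
  have hM : ActFP M (DiagAct M) := h.restrict ι Sum.inl_injective
    (j := fun p => (Sum.inl p.1, Sum.inl p.2)) (fun p q h => by simpa [Prod.ext_iff] using h)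
    (fun _ _ => rfl) (by
      rintro ⟨p | p, q | q⟩ (n | n) ⟨⟨x, y⟩, hxy⟩ <;> simp [umul] at hxy ⊢
      exact ⟨n, rfl⟩)
  have hA : ActFP M (ProdAct act) := h.restrict ι Sum.inl_injective
    (j := fun p => (Sum.inr p.1, Sum.inl p.2)) (fun p q h => by simpa [Prod.ext_iff] using h)
    (fun _ _ => rfl) (by
      rintro ⟨p | p, q | q⟩ (n | n) ⟨⟨x, y⟩, hxy⟩ <;> simp [umul] at hxy ⊢
      exact ⟨n, rfl⟩)
  exact ⟨hM, hA.of_prodAct hact hM.actFG⟩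

/-- For `N = 𝒰(M, A)`: if the diagonal `N`-act is finitely presented, then both the
diagonal `M`-act and the `M`-act `A` are finitely presented. -/
theorem stmt8 {M A : Type*} [Monoid M] [Nonempty A] (act : A → M → A)
    (hact : IsAct act) :
    @ActFP (M ⊕ A) (UMonoid act hact) ((M ⊕ A) × (M ⊕ A))
        (fun p c => (umul act p.1 c, umul act p.2 c)) →
      ActFP M (DiagAct M) ∧ ActFP M act :=
  stmt8_general act hact
end
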